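/- arXiv:1506.02021 — 7 statements merged into one kernel-verified Lean document; each statement's English description precedes it below -/
import Mathlib

section
/- Let w : [0,1] → ℝ be continuous with w(0)=0, and let Span(w) = {t - s : 0 ≤ s ≤ t ≤ 1, w(s) = w(t)}. If there exist u ≥ 0, T > 0, and a level x ∈ ℝ with u + T ≤ 1 such that w(u) = w(u+T) = x and w(u+t) ≠ x for all 0 < t < T (i.e., w has an excursion of length T away from level x), then [0,T] ⊆ Span(w). -/
open Set

/-- The span set of a function on `[0,1]`. -/
def Span01 (w : ℝ → ℝ) : Set ℝ :=
  {d | ∃ s t : ℝ, 0 ≤ s ∧ s ≤ t ∧ t ≤ 1 ∧ w s = w t ∧ d = t - s}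

theorem excursion_spans (w : ℝ → ℝ) (hw : ContinuousOn w (Icc 0 1)) (hw0 : w 0 = 0)
    (u T x : ℝ) (hu : 0 ≤ u) (hT : 0 < T) (huT : u + T ≤ 1)
    (hxu : w u = x) (hxT : w (u + T) = x)
    (hexc : ∀ t : ℝ, 0 < t → t < T → w (u + t) ≠ x) :
    Icc 0 T ⊆ Span01 w := by
  intro d hd
  obtain ⟨hd0, hdT⟩ := hd
  rcases eq_or_lt_of_le hd0 with h0 | h0
  · exact ⟨u, u, hu, le_refl u, by linarith, rfl, by rw [← h0]; ring⟩
  rcases eq_or_lt_of_le hdT with hT' | hT'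
  · exact ⟨u, u + T, hu, by linarith, huT, hxu.trans hxT.symm, by rw [hT']; ring⟩
  -- sign constancy: (w (u+d) - x) * (w (u+T-d) - x) > 0
  have hne1 : w (u + d) ≠ x := hexc d h0 hT'
  have hne2 : w (u + (T - d)) ≠ x := hexc (T - d) (by linarith) (by linarith)
  have hcu : ContinuousOn (fun t => w (u + t)) (Icc 0 T) := by
    apply hw.comp (continuous_const.add continuous_id).continuousOn
    intro t ht
    exact ⟨by simp at ht ⊢; linarith [ht.1], by simp at ht ⊢; linarith [ht.2]⟩
  have hsign : 0 < (w (u + d) - x) * (w (u + (T - d)) - x) := by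
    by_contra h
    push_neg at h
    have hsub : uIcc d (T - d) ⊆ Icc 0 T := by
      rcases le_total d (T - d) with h' | h'
      · rw [uIcc_of_le h']; exact Icc_subset_Icc (by linarith) (by linarith)
      · rw [uIcc_of_ge h']; exact Icc_subset_Icc (by linarith) (by linarith)
    have hcu' : ContinuousOn (fun t => w (u + t)) (uIcc d (T - d)) := hcu.mono hsub
    have hx : x ∈ uIcc (w (u + d)) (w (u + (T - d))) := by
      rcases mul_nonpos_iff.mp h with ⟨h1, h2⟩ | ⟨h1, h2⟩
      · exact mem_uIcc.mpr (Or.inr ⟨by linarith, by linarith⟩)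
      · exact mem_uIcc.mpr (Or.inl ⟨by linarith, by linarith⟩)
    obtain ⟨t, ht, htx⟩ := intermediate_value_uIcc hcu' hx
    have htIcc := hsub ht
    have ht1 : 0 < t := by
      rcases le_total d (T - d) with h' | h'
      · rw [uIcc_of_le h'] at ht; linarith [ht.1]
      · rw [uIcc_of_ge h'] at ht; linarith [ht.1]
    have ht2 : t < T := by
      rcases le_total d (T - d) with h' | h'
      · rw [uIcc_of_le h'] at ht; linarith [ht.2]
      · rw [uIcc_of_ge h'] at ht; linarith [ht.2]
    exact hexc t ht1 ht2 htx
  -- now IVT for g s = w (u + d + s) - w (u + s) on [0, T - d]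
  set g : ℝ → ℝ := fun s => w (u + (d + s)) - w (u + s) with hg
  have hcg : ContinuousOn g (Icc 0 (T - d)) := by
    apply ContinuousOn.sub
    · apply hcu.comp (continuous_const.add continuous_id).continuousOn
      intro s hs
      simp at hs ⊢
      constructor <;> linarith [hs.1, hs.2]
    · apply hcu.mono
      intro s hs
      simp at hs ⊢
      constructor <;> linarith [hs.1, hs.2]
  have hg0 : g 0 = w (u + d) - x := by simp [hg, hxu]
  have hgT : g (T - d) = x - w (u + (T - d)) := by
    have : u + (d + (T - d)) = u + T := by ring
    simp [hg, this, hxT]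
  have h0mem : (0 : ℝ) ∈ uIcc (g 0) (g (T - d)) := by
    rw [hg0, hgT]
    rcases mul_pos_iff.mp hsign with ⟨h1, h2⟩ | ⟨h1, h2⟩
    · exact mem_uIcc.mpr (Or.inr ⟨by linarith, by linarith⟩)
    · exact mem_uIcc.mpr (Or.inl ⟨by linarith, by linarith⟩)
  have hcg' : ContinuousOn g (uIcc 0 (T - d)) := by
    rwa [uIcc_of_le (by linarith : (0:ℝ) ≤ T - d)]
  obtain ⟨s, hs, hgs⟩ := intermediate_value_uIcc hcg' h0mem
  rw [uIcc_of_le (by linarith : (0:ℝ) ≤ T - d)] at hs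
  refine ⟨u + s, u + s + d, by linarith [hs.1], by linarith, by linarith [hs.2], ?_, by ring⟩
  simp only [hg] at hgs
  have heq : u + s + d = u + (d + s) := by ring
  rw [heq]
  linarith [hgs]
end

section
/- Let w : [0,∞) → ℝ be continuous and suppose that for levels x and times 0 ≤ p < q < r < s, w has excursions strictly above level x on the intervals (p,q) and (r,s) (i.e., w(p)=w(q)=w(r)=w(s)=x, w > x on (p,q) and on (r,s)). Then for every t with max{r-p, s-q} ≤ t ≤ s-p, there exist times u ≤ v with v - u = t and w(u) = w(v); the same holds for every t with r-q ≤ t ≤ min{r-p, s-q}. -/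
open Set

theorem two_excursions_spans (w : ℝ → ℝ) (hw : Continuous w) (x p q r s : ℝ)
    (h0 : 0 ≤ p) (hpq : p < q) (hqr : q < r) (hrs : r < s)
    (hp : w p = x) (hq : w q = x) (hr : w r = x) (hs : w s = x)
    (hexc1 : ∀ t : ℝ, p < t → t < q → x < w t)
    (hexc2 : ∀ t : ℝ, r < t → t < s → x < w t) :
    (∀ t : ℝ, max (r - p) (s - q) ≤ t → t ≤ s - p →
      ∃ u v : ℝ, u ≤ v ∧ v - u = t ∧ w u = w v) ∧
    (∀ t : ℝ, r - q ≤ t → t ≤ min (r - p) (s - q) →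
      ∃ u v : ℝ, u ≤ v ∧ v - u = t ∧ w u = w v) := by
  have hge1 : ∀ z : ℝ, p ≤ z → z ≤ q → x ≤ w z := by
    intro z h1 h2
    rcases eq_or_lt_of_le h1 with h | h
    · rw [← h, hp]
    rcases eq_or_lt_of_le h2 with h' | h'
    · rw [h', hq]
    exact (hexc1 z h h').le
  have hge2 : ∀ z : ℝ, r ≤ z → z ≤ s → x ≤ w z := by
    intro z h1 h2
    rcases eq_or_lt_of_le h1 with h | h
    · rw [← h, hr]
    rcases eq_or_lt_of_le h2 with h' | h'
    · rw [h', hs]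
    exact (hexc2 z h h').le
  constructor
  · intro t ht1 ht2
    have htr : r - p ≤ t := le_trans (le_max_left _ _) ht1
    have hts : s - q ≤ t := le_trans (le_max_right _ _) ht1
    have ht0 : 0 ≤ t := le_trans (by linarith) htr
    set g : ℝ → ℝ := fun u => w (u + t) - w u with hg
    have hgc : Continuous g := (hw.comp (continuous_id.add continuous_const)).sub hw
    have hab : p ≤ s - t := by linarith
    have hga : 0 ≤ g p := by
      have := hge2 (p + t) (by linarith) (by linarith)
      simp only [hg, hp]; linarith
    have hgb : g (s - t) ≤ 0 := by
      have := hge1 (s - t) (by linarith) (by linarith)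
      simp only [hg]
      rw [sub_add_cancel, hs]
      linarith
    have := intermediate_value_Icc' hab hgc.continuousOn
    obtain ⟨u, hu, hu0⟩ := this (mem_Icc.2 ⟨hgb, hga⟩)
    exact ⟨u, u + t, by linarith, by ring, by simp only [hg] at hu0; linarith⟩
  · intro t ht1 ht2
    have htr : t ≤ r - p := le_trans ht2 (min_le_left _ _)
    have hts : t ≤ s - q := le_trans ht2 (min_le_right _ _)
    have ht0 : 0 ≤ t := le_trans (by linarith) ht1
    set g : ℝ → ℝ := fun u => w (u + t) - w u with hg
    have hgc : Continuous g := (hw.comp (continuous_id.add continuous_const)).sub hw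
    have hab : r - t ≤ q := by linarith
    have hga : g (r - t) ≤ 0 := by
      have := hge1 (r - t) (by linarith) (by linarith)
      simp only [hg]
      rw [sub_add_cancel, hr]
      linarith
    have hgb : 0 ≤ g q := by
      have := hge2 (q + t) (by linarith) (by linarith)
      simp only [hg, hq]; linarith
    have := intermediate_value_Icc hab hgc.continuousOn
    obtain ⟨u, hu, hu0⟩ := this (mem_Icc.2 ⟨hga, hgb⟩)
    exact ⟨u, u + t, by linarith, by ring, by simp only [hg] at hu0; linarith⟩
end

section
/- The map w ↦ Span(w) from continuous functions on [0,1] starting at 0 (with the sup-norm) to compact subsets of [0,1] (with the Hausdorff metric) is not continuous. Concretely: let f be the piecewise linear function on [0,1] with slope 1 on [0,1/4] ∪ [3/4,1] and slope −1 on [1/4,3/4], and for n ≥ 1 let fₙ be piecewise linear with slope 1 on [0,1/4], slope −1 on [1/4,3/4], and slope 1 − 1/n on [3/4,1]. Then Span(f) = [0,1/2] ∪ {1}, Span(fₙ) = [0,1/2] for each n, ‖fₙ − f‖_∞ → 0, and yet the Hausdorff distance d_H(Span(fₙ), Span(f)) = 1/2 for every n. -/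
open Set

/-- Piecewise linear `f` with slope 1 on `[0,1/4] ∪ [3/4,1]` and slope `-1` on `[1/4,3/4]`. -/
noncomputable def fEx : ℝ → ℝ := fun t =>
  if t ≤ 1/4 then t else if t ≤ 3/4 then 1/2 - t else t - 1

/-- Piecewise linear `fₙ` with slope 1 on `[0,1/4]`, `-1` on `[1/4,3/4]`, `1 - 1/n` on `[3/4,1]`. -/
noncomputable def fnEx (n : ℕ) : ℝ → ℝ := fun t =>
  if t ≤ 1/4 then t else if t ≤ 3/4 then 1/2 - t
  else -1/4 + (1 - 1/(n:ℝ)) * (t - 3/4)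

lemma icc_subset_span_f : Icc (0:ℝ) (1/2) ⊆ Span01 fEx := by
  rintro d ⟨hd0, hd2⟩
  refine ⟨1/4 - d/2, 1/4 + d/2, by linarith, by linarith, by linarith, ?_, by ring⟩
  simp only [fEx]
  split_ifs <;> linarith

lemma span_f : Span01 fEx = Icc 0 (1/2) ∪ {1} := by
  apply Subset.antisymm
  · rintro d ⟨s, t, hs0, hst, ht1, heq, rfl⟩
    simp only [fEx] at heq
    split_ifs at heq <;>
      first
        | (left; constructor <;> linarith)
        | (right; simp only [mem_singleton_iff]; linarith)
        | linarith
  · rintro d (hd | rfl)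
    · exact icc_subset_span_f hd
    · refine ⟨0, 1, le_refl _, by norm_num, le_refl _, ?_, by norm_num⟩
      simp only [fEx]; norm_num

lemma span_fn (n : ℕ) (hn : 1 ≤ n) : Span01 (fnEx n) = Icc 0 (1/2) := by
  have hn1 : (1:ℝ) ≤ (n:ℝ) := by exact_mod_cast hn
  have hnpos : (0:ℝ) < (n:ℝ) := by linarith
  have hinv : 0 < 1/(n:ℝ) := by positivity
  have hinv1 : 1/(n:ℝ) ≤ 1 := by
    rw [div_le_one hnpos]; exact hn1
  apply Subset.antisymm
  · rintro d ⟨s, t, hs0, hst, ht1, heq, rfl⟩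
    have hc : (0:ℝ) ≤ 1 - 1/(n:ℝ) := by linarith
    simp only [fnEx] at heq
    split_ifs at heq with h1 h2 h3 h4 h5 h6 h7 h8
    · constructor <;> linarith
    · constructor <;> linarith
    · exfalso
      have key : (1 - 1/(n:ℝ)) * (t - 3/4) ≤ (1 - 1/(n:ℝ)) * (1/4) :=
        mul_le_mul_of_nonneg_left (by linarith) hc
      linarith
    · exfalso; linarith
    · constructor <;> linarith
    · have key : (1 - 1/(n:ℝ)) * (t - 3/4) ≤ (1 - 1/(n:ℝ)) * (1/4) :=
        mul_le_mul_of_nonneg_left (by linarith) hc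
      constructor <;> linarith
    · exfalso; linarith
    · exfalso; linarith
    · constructor <;> linarith
  · rintro d ⟨hd0, hd2⟩
    refine ⟨1/4 - d/2, 1/4 + d/2, by linarith, by linarith, by linarith, ?_, by ring⟩
    simp only [fnEx]
    split_ifs <;> linarith

lemma diff_bound (n : ℕ) (hn : 1 ≤ n) (t : ℝ) (ht : t ∈ Icc (0:ℝ) 1) :
    |fnEx n t - fEx t| ≤ 1/(n:ℝ) := by
  have hn1 : (1:ℝ) ≤ (n:ℝ) := by exact_mod_cast hn
  have hnpos : (0:ℝ) < (n:ℝ) := by linarith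
  have hinv : 0 < 1/(n:ℝ) := by positivity
  obtain ⟨ht0, ht1⟩ := ht
  rw [abs_le]
  simp only [fnEx, fEx]
  split_ifs with h1 h2
  · constructor <;> linarith
  · constructor <;> linarith
  · have key : -1/4 + (1 - 1/(n:ℝ)) * (t - 3/4) - (t - 1) = -((t - 3/4) * (1/(n:ℝ))) := by
      ring
    rw [key]
    have h34 : (3:ℝ)/4 ≤ t := by linarith
    have : 0 ≤ (t - 3/4) * (1/(n:ℝ)) := mul_nonneg (by linarith) (le_of_lt hinv)
    have : (t - 3/4) * (1/(n:ℝ)) ≤ 1 * (1/(n:ℝ)) :=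
      mul_le_mul_of_nonneg_right (by linarith) (le_of_lt hinv)
    constructor <;> linarith

lemma sup_tendsto :
    Filter.Tendsto (fun n : ℕ => ⨆ t ∈ Icc (0:ℝ) 1, |fnEx n t - fEx t|)
      Filter.atTop (nhds 0) := by
  apply squeeze_zero' (g := fun n : ℕ => 1/(n:ℝ))
  · filter_upwards with n
    exact Real.iSup_nonneg fun t => Real.iSup_nonneg fun _ => abs_nonneg _
  · filter_upwards [Filter.eventually_ge_atTop 1] with n hn
    have hinv : 0 ≤ 1/(n:ℝ) := by positivity
    exact Real.iSup_le (fun t => Real.iSup_le (fun ht => diff_bound n hn t ht) hinv) hinv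
  · exact tendsto_one_div_atTop_nhds_zero_nat

lemma haus_dist : Metric.hausdorffDist (Icc (0:ℝ) (1/2)) (Icc 0 (1/2) ∪ {1}) = 1/2 := by
  have hne : (Icc (0:ℝ) (1/2)).Nonempty := ⟨0, by norm_num⟩
  have hne2 : (Icc (0:ℝ) (1/2) ∪ {1}).Nonempty := ⟨0, Or.inl (by norm_num)⟩
  have hbd : Bornology.IsBounded (Icc (0:ℝ) (1/2)) := Metric.isBounded_Icc _ _
  have hbd2 : Bornology.IsBounded (Icc (0:ℝ) (1/2) ∪ {1}) :=
    hbd.union (Bornology.isBounded_singleton)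
  have hfin := Metric.hausdorffEdist_ne_top_of_nonempty_of_bounded hne hne2 hbd hbd2
  apply le_antisymm
  · apply Metric.hausdorffDist_le_of_mem_dist (by norm_num)
    · intro x hx
      exact ⟨x, Or.inl hx, by simp⟩
    · rintro x (hx | rfl)
      · exact ⟨x, hx, by simp⟩
      · refine ⟨1/2, by norm_num, ?_⟩
        rw [Real.dist_eq]
        rw [abs_of_nonneg (by norm_num)]; norm_num
  · have h1 : (1:ℝ) ∈ Icc (0:ℝ) (1/2) ∪ {1} := Or.inr rfl
    have := Metric.infDist_le_hausdorffDist_of_mem h1 (by rwa [EMetric.hausdorffEdist_comm] at hfin)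
    rw [Metric.hausdorffDist_comm] at this
    refine le_trans ?_ this
    haveI := hne.to_subtype
    rw [Metric.infDist_eq_iInf]
    apply le_ciInf
    rintro ⟨y, hy0, hy2⟩
    rw [Real.dist_eq, abs_of_nonneg (by linarith)]
    linarith

theorem span_not_continuous :
    Span01 fEx = Icc 0 (1/2) ∪ {1} ∧
    (∀ n : ℕ, 1 ≤ n → Span01 (fnEx n) = Icc 0 (1/2)) ∧
    Filter.Tendsto (fun n : ℕ => ⨆ t ∈ Icc (0:ℝ) 1, |fnEx n t - fEx t|)
      Filter.atTop (nhds 0) ∧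
    (∀ n : ℕ, 1 ≤ n → Metric.hausdorffDist (Span01 (fnEx n)) (Span01 fEx) = 1/2) := by
  refine ⟨span_f, fun n hn => span_fn n hn, sup_tendsto, fun n hn => ?_⟩
  rw [span_fn n hn, span_f]
  exact haus_dist
end

section
/- Let gₙ, g be continuous functions on [0,1] with gₙ(0) = g(0) = 0 and ‖gₙ − g‖_∞ → 0 as n → ∞. Then ⋂_{m ∈ ℕ} closure(⋃_{n > m} Span(gₙ)) ⊆ Span(g), where Span(w) = {t−s : 0 ≤ s ≤ t ≤ 1, w(s)=w(t)}. In particular, any subsequential limit of the sets Span(gₙ) in the Hausdorff metric is contained in Span(g). -/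
open Set

theorem span_upper_semicontinuous (g : ℝ → ℝ) (gs : ℕ → ℝ → ℝ)
    (hg : ContinuousOn g (Icc 0 1)) (hg0 : g 0 = 0)
    (hgs : ∀ n, ContinuousOn (gs n) (Icc 0 1)) (hgs0 : ∀ n, gs n 0 = 0)
    (hconv : TendstoUniformlyOn gs g Filter.atTop (Icc 0 1)) :
    ⋂ m : ℕ, closure (⋃ n > m, Span01 (gs n)) ⊆ Span01 g := by
  intro d hd
  simp only [mem_iInter] at hd
  -- extract approximating data
  have H : ∀ m : ℕ, ∃ n, n > m ∧ ∃ s t : ℝ, 0 ≤ s ∧ s ≤ t ∧ t ≤ 1 ∧ gs n s = gs n t ∧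
      |t - s - d| < 1 / (m + 1) := by
    intro m
    have hm := hd m
    rw [Metric.mem_closure_iff] at hm
    obtain ⟨y, hy, hdy⟩ := hm (1 / (m + 1)) (by positivity)
    simp only [mem_iUnion] at hy
    obtain ⟨n, hn, s, t, hs0, hst, ht1, heq, hy'⟩ := hy
    refine ⟨n, hn, s, t, hs0, hst, ht1, heq, ?_⟩
    have : |t - s - d| = dist d y := by
      rw [hy', Real.dist_eq, abs_sub_comm]
    rw [this]; exact hdy
  choose n hn s t hs0 hst ht1 heq hclose using H
  -- compactness
  have hmem : ∀ m, (s m, t m) ∈ (Icc (0:ℝ) 1) ×ˢ (Icc (0:ℝ) 1) := fun m =>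
    ⟨⟨hs0 m, (hst m).trans (ht1 m)⟩, ⟨(hs0 m).trans (hst m), ht1 m⟩⟩
  obtain ⟨⟨a, b⟩, hab, φ, hφ, hlim⟩ :=
    (isCompact_Icc.prod isCompact_Icc).tendsto_subseq hmem
  have ha : a ∈ Icc (0:ℝ) 1 := hab.1
  have hb : b ∈ Icc (0:ℝ) 1 := hab.2
  have hsa : Filter.Tendsto (fun k => s (φ k)) Filter.atTop (nhds a) :=
    (continuous_fst.tendsto _).comp hlim
  have htb : Filter.Tendsto (fun k => t (φ k)) Filter.atTop (nhds b) :=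
    (continuous_snd.tendsto _).comp hlim
  -- n (φ k) → ∞
  have hnk : Filter.Tendsto (fun k => n (φ k)) Filter.atTop Filter.atTop := by
    apply Filter.tendsto_atTop_mono (fun k => ?_) Filter.tendsto_id
    have h1 : φ k ≥ k := hφ.id_le k
    have h2 : n (φ k) > φ k := hn (φ k)
    simp only [id_eq]; omega
  -- uniform convergence along subsequence
  have huc : TendstoUniformlyOn (fun k => gs (n (φ k))) g Filter.atTop (Icc 0 1) :=
    fun u hu => hnk.eventually (hconv u hu)
  have hsa' : Filter.Tendsto (fun k => s (φ k)) Filter.atTop (nhdsWithin a (Icc 0 1)) :=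
    tendsto_nhdsWithin_iff.mpr ⟨hsa, Filter.Eventually.of_forall fun k =>
      ⟨hs0 _, (hst _).trans (ht1 _)⟩⟩
  have htb' : Filter.Tendsto (fun k => t (φ k)) Filter.atTop (nhdsWithin b (Icc 0 1)) :=
    tendsto_nhdsWithin_iff.mpr ⟨htb, Filter.Eventually.of_forall fun k =>
      ⟨(hs0 _).trans (hst _), ht1 _⟩⟩
  have hga : Filter.Tendsto (fun k => gs (n (φ k)) (s (φ k))) Filter.atTop (nhds (g a)) :=
    huc.tendsto_comp (hg a ha) hsa'
  have hgb : Filter.Tendsto (fun k => gs (n (φ k)) (t (φ k))) Filter.atTop (nhds (g b)) :=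
    huc.tendsto_comp (hg b hb) htb'
  have hgab : g a = g b := by
    apply tendsto_nhds_unique hga
    have : (fun k => gs (n (φ k)) (s (φ k))) = fun k => gs (n (φ k)) (t (φ k)) :=
      funext fun k => heq (φ k)
    rw [this]; exact hgb
  -- d = b - a
  have hts : Filter.Tendsto (fun m => t m - s m) Filter.atTop (nhds d) := by
    rw [tendsto_iff_norm_sub_tendsto_zero]
    apply squeeze_zero (fun m => norm_nonneg _) (fun m => (hclose m).le)
    exact tendsto_one_div_add_atTop_nhds_zero_nat
  have hd' : d = b - a := by
    refine tendsto_nhds_unique (hts.comp hφ.tendsto_atTop) (htb.sub hsa)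
  have hab' : a ≤ b :=
    le_of_tendsto_of_tendsto' hsa htb fun k => hst (φ k)
  exact ⟨a, b, ha.1, hab', hb.2, hgab, hd'⟩
end

section
/- Let w : [0,1] → ℝ be continuous and suppose ℓ > 0 is an isolated point of the span set Span(w) = {t−s : 0 ≤ s ≤ t ≤ 1, w(s)=w(t)}. Then there exists a level x ∈ ℝ such that the level set {t ∈ [0,1] : w(t) = x} has at least two isolated points. -/
open Set

/-- `a` is an isolated point of `S ⊆ ℝ`. -/
def IsolatedIn (S : Set ℝ) (a : ℝ) : Prop :=
  a ∈ S ∧ ∃ ε > 0, S ∩ Ioo (a - ε) (a + ε) = {a}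

theorem isolated_span_gives_isolated_level_points (w : ℝ → ℝ)
    (hw : ContinuousOn w (Icc 0 1)) (ℓ : ℝ) (hℓ : 0 < ℓ)
    (hiso : IsolatedIn (Span01 w) ℓ) :
    ∃ x a b : ℝ, a ≠ b ∧
      IsolatedIn {t ∈ Icc (0:ℝ) 1 | w t = x} a ∧
      IsolatedIn {t ∈ Icc (0:ℝ) 1 | w t = x} b := by
  obtain ⟨⟨s, t, hs0, hst, ht1, hwst, hdl⟩, ε, hε, hεiso⟩ := hiso
  subst hdl
  set ε' := min ε (t - s) with hε'
  have hε'pos : 0 < ε' := lt_min hε hℓ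
  refine ⟨w s, s, t, by nlinarith [le_min_iff.mp (le_refl ε')], ?_, ?_⟩
  · refine ⟨⟨⟨hs0, le_trans hst ht1⟩, rfl⟩, ε', hε'pos, ?_⟩
    apply Subset.antisymm
    · rintro s' ⟨⟨⟨hs'0, hs'1⟩, hws'⟩, hlo, hhi⟩
      have hs't : s' ≤ t := by
        have := min_le_right ε (t - s)
        linarith
      have hmem : t - s' ∈ Span01 w ∩ Ioo ((t - s) - ε) ((t - s) + ε) := by
        refine ⟨⟨s', t, hs'0, hs't, ht1, by rw [hws', hwst], rfl⟩, ?_, ?_⟩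
        · have := min_le_left ε (t - s); linarith
        · have := min_le_left ε (t - s); linarith
      have := hεiso ▸ hmem
      simp only [mem_singleton_iff] at this
      simp only [mem_singleton_iff]
      linarith
    · rintro x rfl
      exact ⟨⟨⟨hs0, le_trans hst ht1⟩, rfl⟩, by linarith, by linarith⟩
  · refine ⟨⟨⟨le_trans hs0 hst, ht1⟩, hwst.symm⟩, ε', hε'pos, ?_⟩
    apply Subset.antisymm
    · rintro t' ⟨⟨⟨ht'0, ht'1⟩, hwt'⟩, hlo, hhi⟩
      have hst' : s ≤ t' := by
        have := min_le_right ε (t - s)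
        linarith
      have hmem : t' - s ∈ Span01 w ∩ Ioo ((t - s) - ε) ((t - s) + ε) := by
        refine ⟨⟨s, t', hs0, hst', ht'1, by rw [hwt', hwst], rfl⟩, ?_, ?_⟩
        · have := min_le_left ε (t - s); linarith
        · have := min_le_left ε (t - s); linarith
      have := hεiso ▸ hmem
      simp only [mem_singleton_iff] at this
      simp only [mem_singleton_iff]
      linarith
    · rintro x rfl
      exact ⟨⟨⟨le_trans hs0 hst, ht1⟩, hwst.symm⟩, by linarith, by linarith⟩
end

section
/- For any function f : ℝ → ℝ, the set of values x ∈ ℝ that are attained as a strict local extremum of f (i.e., x = f(s) where s is a strict local maximum or strict local minimum of f) is countable. -/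
open Set

theorem countable_strict_local_extremum_values (f : ℝ → ℝ) :
    Set.Countable {x : ℝ | ∃ s : ℝ, f s = x ∧
      ((∃ ε > 0, ∀ t : ℝ, t ≠ s → |t - s| < ε → f t < f s) ∨
       (∃ ε > 0, ∀ t : ℝ, t ≠ s → |t - s| < ε → f s < f t))} := by
  set Tmax : ℚ → ℚ → Set ℝ := fun p q =>
    {x : ℝ | ∃ s ∈ Ioo (p : ℝ) q, f s = x ∧ ∀ t ∈ Ioo (p : ℝ) q, t ≠ s → f t < f s} with hT
  set Tmin : ℚ → ℚ → Set ℝ := fun p q =>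
    {x : ℝ | ∃ s ∈ Ioo (p : ℝ) q, f s = x ∧ ∀ t ∈ Ioo (p : ℝ) q, t ≠ s → f s < f t} with hT'
  have hmax : ∀ p q : ℚ, (Tmax p q).Subsingleton := by
    intro p q x₁ hx₁ x₂ hx₂
    obtain ⟨s₁, hs₁, hf₁, h₁⟩ := hx₁
    obtain ⟨s₂, hs₂, hf₂, h₂⟩ := hx₂
    by_cases hss : s₁ = s₂
    · rw [← hf₁, ← hf₂, hss]
    · have := h₁ s₂ hs₂ (Ne.symm hss)
      have := h₂ s₁ hs₁ hss
      linarith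
  have hmin : ∀ p q : ℚ, (Tmin p q).Subsingleton := by
    intro p q x₁ hx₁ x₂ hx₂
    obtain ⟨s₁, hs₁, hf₁, h₁⟩ := hx₁
    obtain ⟨s₂, hs₂, hf₂, h₂⟩ := hx₂
    by_cases hss : s₁ = s₂
    · rw [← hf₁, ← hf₂, hss]
    · have := h₁ s₂ hs₂ (Ne.symm hss)
      have := h₂ s₁ hs₁ hss
      linarith
  have hcount : (⋃ (p : ℚ) (q : ℚ), Tmax p q ∪ Tmin p q).Countable := by
    refine Set.countable_iUnion fun p => Set.countable_iUnion fun q => ?_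
    exact ((hmax p q).countable).union ((hmin p q).countable)
  refine hcount.mono ?_
  rintro x ⟨s, hfs, hcase⟩
  rcases hcase with ⟨ε, hε, h⟩ | ⟨ε, hε, h⟩
  · obtain ⟨p, hp1, hp2⟩ := exists_rat_btwn (by linarith : s - ε < s)
    obtain ⟨q, hq1, hq2⟩ := exists_rat_btwn (by linarith : s < s + ε)
    refine Set.mem_iUnion.2 ⟨p, Set.mem_iUnion.2 ⟨q, Or.inl ⟨s, ⟨hp2, hq1⟩, hfs, ?_⟩⟩⟩
    intro t ht hts
    exact h t hts (abs_sub_lt_iff.2 ⟨by cases ht; linarith, by cases ht; linarith⟩)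
  · obtain ⟨p, hp1, hp2⟩ := exists_rat_btwn (by linarith : s - ε < s)
    obtain ⟨q, hq1, hq2⟩ := exists_rat_btwn (by linarith : s < s + ε)
    refine Set.mem_iUnion.2 ⟨p, Set.mem_iUnion.2 ⟨q, Or.inr ⟨s, ⟨hp2, hq1⟩, hfs, ?_⟩⟩⟩
    intro t ht hts
    exact h t hts (abs_sub_lt_iff.2 ⟨by cases ht; linarith, by cases ht; linarith⟩)
end

section
/- Let S = Span(B) = {t−s : s ≤ t, B(s) = B(t)} be the span set of a standard linear Brownian motion B on [0,∞). If for every T > 0 almost surely B has an excursion away from 0 of length exceeding T, then almost surely S = [0,∞). -/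
open Set MeasureTheory ProbabilityTheory

/-- Deterministic lemma: a continuous path with an excursion of length `T'` away
from `0` realizes every span `d ∈ [0, T']`. -/
lemma span_of_excursion (f : ℝ → ℝ) (hf : Continuous f) {u T' d : ℝ}
    (hu : 0 ≤ u) (hd : 0 ≤ d) (hdT : d ≤ T')
    (h0 : f u = 0) (h1 : f (u + T') = 0)
    (hne : ∀ t, u < t → t < u + T' → f t ≠ 0) :
    ∃ s t : ℝ, 0 ≤ s ∧ s ≤ t ∧ f s = f t ∧ d = t - s := by
  rcases eq_or_lt_of_le hd with h | hd0
  · exact ⟨u, u, hu, le_rfl, rfl, by linarith⟩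
  rcases eq_or_lt_of_le hdT with h | hdT'
  · exact ⟨u, u + d, hu, by linarith, by rw [h0, h, h1], by ring⟩
  -- sign constancy on the open excursion interval
  have hsign : ∀ a, u < a → a < u + T' → ∀ b, u < b → b < u + T' → 0 < f a * f b := by
    intro a ha1 ha2 b hb1 hb2
    by_contra h
    push_neg at h
    have h0mem : (0:ℝ) ∈ uIcc (f a) (f b) := by
      rcases mul_nonpos_iff.mp h with ⟨h1, h2⟩ | ⟨h1, h2⟩
      · exact mem_uIcc.mpr (Or.inr ⟨h2, h1⟩)
      · exact mem_uIcc.mpr (Or.inl ⟨h1, h2⟩)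
    obtain ⟨c, hc, hc0⟩ := intermediate_value_uIcc hf.continuousOn h0mem
    have hcr : u < c ∧ c < u + T' := by
      rcases mem_uIcc.mp hc with ⟨h1, h2⟩ | ⟨h1, h2⟩ <;> constructor <;> linarith
    exact hne c hcr.1 hcr.2 hc0
  set g : ℝ → ℝ := fun s => f (s + d) - f s with hgdef
  have hg : Continuous g := (hf.comp (continuous_id.add continuous_const)).sub hf
  have hgu : g u = f (u + d) := by simp [hgdef, h0]
  have hgv : g (u + T' - d) = - f (u + T' - d) := by
    have he : u + T' - d + d = u + T' := by ring
    simp [hgdef, he, h1]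
  have h2 : g u * g (u + T' - d) < 0 := by
    rw [hgu, hgv]
    have := hsign (u + d) (by linarith) (by linarith) (u + T' - d) (by linarith) (by linarith)
    nlinarith
  have h0mem : (0:ℝ) ∈ uIcc (g u) (g (u + T' - d)) := by
    rcases mul_neg_iff.mp h2 with ⟨ha, hb⟩ | ⟨ha, hb⟩
    · exact mem_uIcc.mpr (Or.inr ⟨hb.le, ha.le⟩)
    · exact mem_uIcc.mpr (Or.inl ⟨ha.le, hb.le⟩)
  obtain ⟨s, hs, hs0⟩ := intermediate_value_uIcc hg.continuousOn h0mem
  have hsr : u ≤ s ∧ s ≤ u + T' - d := by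
    rcases mem_uIcc.mp hs with ⟨h1, h2⟩ | ⟨h1, h2⟩ <;> constructor <;> linarith
  have hfs : f (s + d) - f s = 0 := hs0
  exact ⟨s, s + d, by linarith [hsr.1], by linarith, by linarith, by ring⟩

theorem span_of_BM_is_Ici {Ω : Type*} [MeasureSpace Ω]
    [IsProbabilityMeasure (ℙ : Measure Ω)]
    (B : Ω → ℝ → ℝ) (hcont : ∀ ω, Continuous (B ω))
    (hexc : ∀ T : ℝ, 0 < T → ∀ᵐ ω ∂ℙ, ∃ u ≥ (0:ℝ), ∃ T' > T,
      B ω u = 0 ∧ B ω (u + T') = 0 ∧ ∀ t : ℝ, u < t → t < u + T' → B ω t ≠ 0) :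
    ∀ᵐ ω ∂ℙ,
      {d : ℝ | ∃ s t : ℝ, 0 ≤ s ∧ s ≤ t ∧ B ω s = B ω t ∧ d = t - s} = Ici 0 := by
  have hae : ∀ᵐ ω ∂ℙ, ∀ n : ℕ, ∃ u ≥ (0:ℝ), ∃ T' > (n:ℝ) + 1,
      B ω u = 0 ∧ B ω (u + T') = 0 ∧ ∀ t : ℝ, u < t → t < u + T' → B ω t ≠ 0 :=
    ae_all_iff.mpr fun n => hexc ((n:ℝ) + 1) (by positivity)
  filter_upwards [hae] with ω hω
  ext d
  simp only [mem_setOf_eq, mem_Ici]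
  constructor
  · rintro ⟨s, t, hs, hst, _, rfl⟩
    linarith
  · intro hd
    obtain ⟨n, hn⟩ := exists_nat_gt d
    obtain ⟨u, hu, T', hT', hB0, hB1, hne⟩ := hω n
    exact span_of_excursion (B ω) (hcont ω) hu hd (by linarith) hB0 hB1 hne
end
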